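/- Suppose the EV has terminal position s_N, velocity v_N, and the TV ahead has position x_N^TV ≥ s_N and minimal velocity v_min^TV ≥ 0. If s_N ≤ x_N^TV − Δs, and v_N ≤ v_min^TV − √(2·Δs·(−a_min)) (with Δs > 0, a_min < 0), and both vehicles subsequently brake at deceleration a_min until standstill, then the EV's stopping position is at most the TV's stopping position, i.e., no collision occurs. -/
import Mathlib

/-- Terminal safety constraint: if `s_N ≤ x_N^TV - Δs` and
`v_N ≤ v_min^TV - √(2·Δs·(-a_min))` (with `Δs > 0`, `a_min < 0`, `v_N ≥ 0`,
`v_min^TV ≥ 0`), and both vehicles brake at deceleration `a_min` until standstill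
(traveling `-v²/(2 a_min)`), then the EV stopping position is at most the TV stopping
position. -/
theorem terminal_set_no_collision (sN vN xTV vTVmin ds aMin : ℝ)
    (hle : sN ≤ xTV) (hvTV : 0 ≤ vTVmin) (hvN : 0 ≤ vN)
    (hds : 0 < ds) (ha : aMin < 0)
    (hpos : sN ≤ xTV - ds)
    (hvel : vN ≤ vTVmin - Real.sqrt (2 * ds * (-aMin))) :
    sN + (-vN ^ 2 / (2 * aMin)) ≤ xTV + (-vTVmin ^ 2 / (2 * aMin)) := by
  set c := Real.sqrt (2 * ds * (-aMin)) with hc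
  have hcnn : 0 ≤ c := Real.sqrt_nonneg _
  have hcsq : c ^ 2 = 2 * ds * (-aMin) := by
    rw [hc, sq]
    exact Real.mul_self_sqrt (by nlinarith)
  have hv2 : vN ^ 2 ≤ (vTVmin - c) ^ 2 := by
    have : vN ≤ vTVmin - c := hvel
    nlinarith
  have key : vN ^ 2 ≤ vTVmin ^ 2 + 2 * ds * (-aMin) := by nlinarith
  have h2a : 2 * aMin < 0 := by linarith
  have hna : 0 < 2 * (-aMin) := by linarith
  have h : vN ^ 2 / (2 * (-aMin)) ≤ vTVmin ^ 2 / (2 * (-aMin)) + ds := by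
    rw [div_le_iff₀ hna, add_mul, div_mul_cancel₀ _ (ne_of_gt hna)]
    nlinarith
  have e1 : -vN ^ 2 / (2 * aMin) = vN ^ 2 / (2 * (-aMin)) := by ring
  have e2 : -vTVmin ^ 2 / (2 * aMin) = vTVmin ^ 2 / (2 * (-aMin)) := by ring
  rw [e1, e2]
  linarith
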